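/- arXiv:2407.16872 — 6 statements merged into one kernel-verified Lean document; each statement's English description precedes it below -/
import Mathlib

section
/- Let a : ℝ → ℝ be twice continuously differentiable with |a''(t)| ≤ K for all t ∈ ℝ, let c ∈ ℝ with a'(c) ≠ 0, let B > 0 and let 𝕄 be a positive integer. Then there exist constants C > 0 and ε₀ > 0 (depending only on K, a'(c), B, 𝕄) such that for every ε ∈ (0, ε₀] and every y ∈ ℝ with |y| ≤ B, the sequence defined by p₁ = ε·y + c and p_{n+1} = (a(p_n) − a(c))/a'(c) + c satisfies |(a(p_𝕄) − a(c))/(a'(c)·ε) − y| ≤ C·ε. -/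
lemma my_taylor_bound (a : ℝ → ℝ) (K : ℝ) (ha : ContDiff ℝ 2 a)
    (hK : ∀ t : ℝ, |deriv (deriv a) t| ≤ K) (c x : ℝ) :
    |a x - a c - deriv a c * (x - c)| ≤ K * (x - c) ^ 2 := by
  have hda : Differentiable ℝ a := ha.differentiable (by norm_num)
  have hda' : Differentiable ℝ (deriv a) := by
    have h2 : ContDiff ℝ ((1 : ℕ∞) + 1) a := by exact_mod_cast ha
    exact (contDiff_succ_iff_deriv.mp h2).2.2.differentiable (by simp)
  have hlip : ∀ t : ℝ, |deriv a t - deriv a c| ≤ K * |t - c| := by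
    intro t
    have := Convex.norm_image_sub_le_of_norm_deriv_le (f := deriv a) (s := Set.univ)
      (fun u _ => (hda' u)) (fun u _ => hK u) convex_univ (Set.mem_univ c) (Set.mem_univ t)
    simpa [Real.norm_eq_abs] using this
  set f : ℝ → ℝ := fun t => a t - a c - deriv a c * (t - c) with hf
  have hdf : ∀ t : ℝ, HasDerivAt f (deriv a t - deriv a c) t := by
    intro t
    have h1 := (hda t).hasDerivAt
    have hlin : HasDerivAt (fun t : ℝ => a c + deriv a c * (t - c)) (deriv a c) t := by
      simpa using (((hasDerivAt_id t).sub_const c).const_mul (deriv a c)).const_add (a c)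
    have := h1.sub hlin
    simpa [hf, sub_sub, Pi.sub_def] using this
  have hK0 : 0 ≤ K := le_trans (abs_nonneg _) (hK 0)
  have key := Convex.norm_image_sub_le_of_norm_deriv_le (f := f) (s := Set.uIcc c x)
    (C := K * |x - c|)
    (fun u _ => (hdf u).differentiableAt)
    (fun u hu => by
      rw [(hdf u).deriv]
      have h1 := hlip u
      have h2 : |u - c| ≤ |x - c| := Set.abs_sub_left_of_mem_uIcc hu
      calc ‖deriv a u - deriv a c‖ = |deriv a u - deriv a c| := rfl
        _ ≤ K * |u - c| := h1
        _ ≤ K * |x - c| := by nlinarith [abs_nonneg (u - c)])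
    (convex_uIcc c x) Set.left_mem_uIcc Set.right_mem_uIcc
  have hfc : f c = 0 := by simp [hf]
  have hkey : |f x| ≤ K * |x - c| * |x - c| := by
    simpa [hfc, Real.norm_eq_abs] using key
  calc |a x - a c - deriv a c * (x - c)| = |f x| := rfl
    _ ≤ K * |x - c| * |x - c| := hkey
    _ = K * (x - c) ^ 2 := by rw [mul_assoc, ← abs_mul, ← sq, abs_sq]

/-- key estimate for attaching extra hidden layers with a C² activation. -/
theorem stmt_0 (a : ℝ → ℝ) (K : ℝ) (ha : ContDiff ℝ 2 a)
    (hK : ∀ t : ℝ, |deriv (deriv a) t| ≤ K)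
    (c : ℝ) (hc : deriv a c ≠ 0) (B : ℝ) (hB : 0 < B)
    (M : ℕ) (hM : 1 ≤ M) :
    ∃ C > (0 : ℝ), ∃ ε₀ > (0 : ℝ), ∀ ε : ℝ, ε ∈ Set.Ioc 0 ε₀ → ∀ y : ℝ, |y| ≤ B →
      ∀ p : ℕ → ℝ, p 1 = ε * y + c →
        (∀ n, 1 ≤ n → p (n + 1) = (a (p n) - a c) / deriv a c + c) →
        |(a (p M) - a c) / (deriv a c * ε) - y| ≤ C * ε := by
  have hK0 : 0 ≤ K := le_trans (abs_nonneg _) (hK 0)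
  set D := |deriv a c| with hD
  have hD0 : 0 < D := abs_pos.mpr hc
  set K1 : ℝ := (K + 1) / D with hK1
  have hK10 : 0 < K1 := div_pos (by linarith) hD0
  have hM0 : (0 : ℝ) < (M : ℝ) := by exact_mod_cast hM
  have step : ∀ x : ℝ, |(a x - a c) / deriv a c + c - c - (x - c)| ≤ K1 * (x - c) ^ 2 := by
    intro x
    have ht := my_taylor_bound a K ha hK c x
    have heq : (a x - a c) / deriv a c + c - c - (x - c)
        = (a x - a c - deriv a c * (x - c)) / deriv a c := by
      field_simp
      ring
    rw [heq, abs_div, ← hD, div_le_iff₀ hD0]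
    have hgoal : K1 * (x - c) ^ 2 * D = (K + 1) * (x - c) ^ 2 := by
      rw [hK1]; field_simp
    rw [hgoal]
    nlinarith [sq_nonneg (x - c)]
  refine ⟨4 * K1 * B ^ 2 * M, by positivity, 1 / (4 * K1 * B * M), by positivity, ?_⟩
  rintro ε ⟨hε0, hε1⟩ y hy p hp1 hprec
  set Δ : ℝ := K1 * (2 * ε * B) ^ 2 with hΔ
  have hΔ0 : 0 ≤ Δ := by positivity
  have h4 : 4 * K1 * B * (M : ℝ) * ε ≤ 1 := by
    rw [le_div_iff₀ (by positivity)] at hε1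
    nlinarith
  have hMΔ : (M : ℝ) * Δ ≤ ε * B := by
    have heq : (M : ℝ) * Δ = (4 * K1 * B * M * ε) * (ε * B) := by rw [hΔ]; ring
    rw [heq]
    nlinarith [mul_pos hε0 hB]
  have hp1c : |p 1 - c| ≤ ε * B := by
    rw [hp1]
    simp only [add_sub_cancel_right, abs_mul, abs_of_pos hε0]
    exact mul_le_mul_of_nonneg_left hy hε0.le
  have claim : ∀ n : ℕ, 1 ≤ n → n ≤ M + 1 → |p n - p 1| ≤ ((n : ℝ) - 1) * Δ := by
    intro n hn
    induction n, hn using Nat.le_induction with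
    | base => intro _; simp
    | succ n hn ih =>
      intro hnM
      have hnM' : n ≤ M := by omega
      have hprev : |p n - p 1| ≤ ((n : ℝ) - 1) * Δ := ih (by omega)
      have hpnc : |p n - c| ≤ 2 * ε * B := by
        have h1 : |p n - c| ≤ |p n - p 1| + |p 1 - c| := abs_sub_le (p n) (p 1) c
        have h2 : ((n : ℝ) - 1) * Δ ≤ (M : ℝ) * Δ := by
          apply mul_le_mul_of_nonneg_right _ hΔ0
          have : (n : ℝ) ≤ M := by exact_mod_cast hnM'
          linarith
        linarith
      have hstep : |p (n + 1) - p n| ≤ Δ := by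
        rw [hprec n hn]
        have h2 : K1 * (p n - c) ^ 2 ≤ Δ := by
          rw [hΔ]
          apply mul_le_mul_of_nonneg_left _ hK10.le
          calc (p n - c) ^ 2 = |p n - c| ^ 2 := (sq_abs _).symm
            _ ≤ (2 * ε * B) ^ 2 := by
              apply pow_le_pow_left₀ (abs_nonneg _) hpnc
        calc |(a (p n) - a c) / deriv a c + c - p n|
            = |(a (p n) - a c) / deriv a c + c - c - (p n - c)| := by ring_nf
          _ ≤ K1 * (p n - c) ^ 2 := step (p n)
          _ ≤ Δ := h2
      have htri : |p (n + 1) - p 1| ≤ |p (n + 1) - p n| + |p n - p 1| := abs_sub_le _ _ _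
      push_cast
      have hre : ((n : ℝ) + 1 - 1) * Δ = Δ + ((n : ℝ) - 1) * Δ := by ring
      rw [hre]
      linarith
  have hfinal : |p (M + 1) - p 1| ≤ (M : ℝ) * Δ := by
    have h := claim (M + 1) (by omega) le_rfl
    push_cast at h
    have hre : ((M : ℝ) + 1 - 1) * Δ = (M : ℝ) * Δ := by ring
    linarith [hre ▸ h]
  have hpM1 : p (M + 1) = (a (p M) - a c) / deriv a c + c := hprec M hM
  have hexpr : (a (p M) - a c) / (deriv a c * ε) - y = (p (M + 1) - p 1) / ε := by
    rw [hpM1, hp1]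
    field_simp
    ring
  rw [hexpr, abs_div, abs_of_pos hε0, div_le_iff₀ hε0]
  have heq2 : (4 : ℝ) * K1 * B ^ 2 * M * ε * ε = (M : ℝ) * Δ := by rw [hΔ]; ring
  rw [heq2]
  exact hfinal
end

section
/- Let N ≥ 2 be an integer, set x_i = (i−1)/(N−1) for i = 1, …, N and h = 1/(2(N−1)), and let φ_{x_i}(x) = (1/h)·ReLU(x − x_i + h) − (2/h)·ReLU(x − x_i) + (1/h)·ReLU(x − x_i − h). Let b₁, b₂ ∈ [0, 1), define I₁(x) = (Σ_{i : x_i ≥ 1/2} φ_{x_i}(x)) − b₁, I₂(x) = (Σ_{i : x_i < 1/2} φ_{x_i}(x)) − b₂, and f₂(x) = ReLU(I₁(x))/(1 − b₁) − ReLU(I₂(x))/(1 − b₂). Then: (i) for every i, f₂(x_i) = 1 if x_i ≥ 1/2 and f₂(x_i) = −1 if x_i < 1/2; and (ii) for every x ∈ ℝ such that |x − x_i| ≥ (1 − b₁)·h for all i with x_i ≥ 1/2 and |x − x_i| ≥ (1 − b₂)·h for all i with x_i < 1/2, one has f₂(x) = 0. -/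
noncomputable def relu (x : ℝ) : ℝ := max x 0

/-- The one-dimensional ReLU hat function of half-width `h` centered at `t`. -/
noncomputable def hat (h t x : ℝ) : ℝ :=
  (1 / h) * relu (x - t + h) - (2 / h) * relu (x - t) + (1 / h) * relu (x - t - h)


lemma hat_formula {h : ℝ} (hh : 0 < h) (t x : ℝ) :
    hat h t x = max (1 - |x - t| / h) 0 := by
  have hne : h ≠ 0 := ne_of_gt hh
  unfold hat relu
  rcases le_total (x - t) 0 with hd | hd
  · rw [abs_of_nonpos hd]
    rcases le_total (x - t + h) 0 with h1 | h1
    · rw [max_eq_right h1, max_eq_right hd, max_eq_right (by linarith),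
        max_eq_right (by rw [sub_nonpos, le_div_iff₀ hh]; linarith)]
      ring
    · rw [max_eq_left h1, max_eq_right hd, max_eq_right (by linarith),
        max_eq_left (by rw [sub_nonneg, div_le_one hh]; linarith)]
      field_simp
      ring
  · rw [abs_of_nonneg hd]
    rcases le_total (x - t - h) 0 with h1 | h1
    · rw [max_eq_left (by linarith), max_eq_left hd, max_eq_right h1,
        max_eq_left (by rw [sub_nonneg, div_le_one hh]; linarith)]
      field_simp
      ring
    · rw [max_eq_left (by linarith), max_eq_left hd, max_eq_left h1,
        max_eq_right (by rw [sub_nonpos, le_div_iff₀ hh]; linarith)]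
      field_simp
      ring

lemma hat_nonneg {h : ℝ} (hh : 0 < h) (t x : ℝ) : 0 ≤ hat h t x := by
  rw [hat_formula hh]; exact le_max_right _ _

lemma hat_self {h : ℝ} (hh : 0 < h) (t : ℝ) : hat h t t = 1 := by
  rw [hat_formula hh]; simp

lemma hat_eq_zero {h : ℝ} (hh : 0 < h) {t x : ℝ} (hd : h ≤ |x - t|) : hat h t x = 0 := by
  rw [hat_formula hh]
  apply max_eq_right
  rw [sub_nonpos, le_div_iff₀ hh]; linarith

lemma hat_le {h b : ℝ} (hh : 0 < h) (hb : 0 ≤ b) {t x : ℝ}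
    (hd : (1 - b) * h ≤ |x - t|) : hat h t x ≤ b := by
  rw [hat_formula hh]
  apply max_le _ hb
  have : 1 - b ≤ |x - t| / h := by rw [le_div_iff₀ hh]; linarith
  linarith

lemma hat_pos {h t x : ℝ} (hh : 0 < h) (hp : 0 < hat h t x) : |x - t| < h := by
  by_contra hc
  push_neg at hc
  rw [hat_eq_zero hh hc] at hp
  exact lt_irrefl 0 hp

/-- 1-D binary classification network: zero training loss yet
output 0 away from the training points. -/
theorem stmt_3 (N : ℕ) (hN : 2 ≤ N)
    (x : ℕ → ℝ) (hx : ∀ i, x i = ((i : ℝ) - 1) / ((N : ℝ) - 1))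
    (h : ℝ) (hh : h = 1 / (2 * ((N : ℝ) - 1)))
    (b₁ b₂ : ℝ) (hb₁ : 0 ≤ b₁ ∧ b₁ < 1) (hb₂ : 0 ≤ b₂ ∧ b₂ < 1)
    (I₁ I₂ f₂ : ℝ → ℝ)
    (hI₁ : ∀ t, I₁ t =
      (∑ i ∈ (Finset.Icc 1 N).filter (fun i => (1 : ℝ) / 2 ≤ x i), hat h (x i) t) - b₁)
    (hI₂ : ∀ t, I₂ t =
      (∑ i ∈ (Finset.Icc 1 N).filter (fun i => x i < (1 : ℝ) / 2), hat h (x i) t) - b₂)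
    (hf : ∀ t, f₂ t = relu (I₁ t) / (1 - b₁) - relu (I₂ t) / (1 - b₂)) :
    (∀ i ∈ Finset.Icc 1 N,
      ((1 : ℝ) / 2 ≤ x i → f₂ (x i) = 1) ∧ (x i < (1 : ℝ) / 2 → f₂ (x i) = -1)) ∧
    (∀ t : ℝ,
      (∀ i ∈ Finset.Icc 1 N, (1 : ℝ) / 2 ≤ x i → (1 - b₁) * h ≤ |t - x i|) →
      (∀ i ∈ Finset.Icc 1 N, x i < (1 : ℝ) / 2 → (1 - b₂) * h ≤ |t - x i|) →
      f₂ t = 0) := by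
  have hN1 : (1 : ℝ) ≤ (N : ℝ) - 1 := by
    have : (2 : ℝ) ≤ (N : ℝ) := by exact_mod_cast hN
    linarith
  have hNpos : (0 : ℝ) < (N : ℝ) - 1 := by linarith
  have hhpos : 0 < h := by rw [hh]; positivity
  -- separation of grid points
  have hsep : ∀ i j : ℕ, i ≠ j → 2 * h ≤ |x i - x j| := by
    intro i j hij
    have h1 : (1 : ℝ) ≤ |(i : ℝ) - (j : ℝ)| := by
      rcases Nat.lt_or_ge i j with hl | hg
      · have : (i : ℝ) + 1 ≤ (j : ℝ) := by exact_mod_cast hl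
        rw [abs_sub_comm, abs_of_nonneg (by linarith)]; linarith
      · have hl : j < i := lt_of_le_of_ne hg (Ne.symm hij)
        have : (j : ℝ) + 1 ≤ (i : ℝ) := by exact_mod_cast hl
        rw [abs_of_nonneg (by linarith)]; linarith
    have hdiff : x i - x j = ((i : ℝ) - (j : ℝ)) / ((N : ℝ) - 1) := by
      rw [hx, hx]; ring
    rw [hdiff, abs_div, abs_of_pos hNpos, hh]
    have heq : 2 * (1 / (2 * ((N:ℝ) - 1))) = 1 / ((N:ℝ) - 1) := by
      field_simp
    rw [heq]
    gcongr
  -- one-positive-hat sum bound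
  have sum_le : ∀ (S : Finset ℕ) (t b : ℝ), 0 ≤ b →
      (∀ i ∈ S, hat h (x i) t ≤ b) → ∑ i ∈ S, hat h (x i) t ≤ b := by
    intro S t b hb hle
    by_cases hex : ∃ j ∈ S, 0 < hat h (x j) t
    · obtain ⟨j, hjS, hjpos⟩ := hex
      have hjlt : |t - x j| < h := hat_pos hhpos hjpos
      rw [Finset.sum_eq_single_of_mem j hjS ?_]
      · exact hle j hjS
      · intro i hiS hij
        apply hat_eq_zero hhpos
        have hs := hsep i j hij
        have htri : |x i - x j| ≤ |t - x i| + |t - x j| := by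
          calc |x i - x j| ≤ |x i - t| + |t - x j| := abs_sub_le _ _ _
            _ = |t - x i| + |t - x j| := by rw [abs_sub_comm]
        linarith
    · push_neg at hex
      have : ∑ i ∈ S, hat h (x i) t = 0 :=
        Finset.sum_eq_zero fun i hi => le_antisymm (hex i hi) (hat_nonneg hhpos _ _)
      rw [this]; exact hb
  have hb₁pos : 0 < 1 - b₁ := by linarith [hb₁.2]
  have hb₂pos : 0 < 1 - b₂ := by linarith [hb₂.2]
  -- sum at grid point
  have sum_at : ∀ (p : ℕ → Prop) [DecidablePred p] (i : ℕ), i ∈ Finset.Icc 1 N →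
      ∑ j ∈ (Finset.Icc 1 N).filter p, hat h (x j) (x i) = if p i then 1 else 0 := by
    intro p _ i hi
    by_cases hpi : p i
    · rw [if_pos hpi]
      rw [Finset.sum_eq_single_of_mem i (Finset.mem_filter.mpr ⟨hi, hpi⟩) ?_]
      · exact hat_self hhpos _
      · intro j hjS hji
        apply hat_eq_zero hhpos
        have := hsep i j (Ne.symm hji)
        linarith
    · rw [if_neg hpi]
      apply Finset.sum_eq_zero
      intro j hj
      have hji : j ≠ i := by
        rintro rfl; exact hpi (Finset.mem_filter.mp hj).2
      apply hat_eq_zero hhpos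
      have := hsep i j (Ne.symm hji)
      linarith
  constructor
  · intro i hi
    constructor
    · intro hge
      rw [hf, hI₁, hI₂, sum_at _ i hi, sum_at _ i hi,
        if_pos hge, if_neg (not_lt.mpr hge)]
      have r1 : relu (1 - b₁) = 1 - b₁ := max_eq_left (le_of_lt hb₁pos)
      have r2 : relu (0 - b₂) = 0 := max_eq_right (by linarith [hb₂.1])
      rw [r1, r2, div_self (ne_of_gt hb₁pos)]
      simp
    · intro hlt
      rw [hf, hI₁, hI₂, sum_at _ i hi, sum_at _ i hi,
        if_neg (not_le.mpr hlt), if_pos hlt]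
      have r1 : relu (0 - b₁) = 0 := max_eq_right (by linarith [hb₁.1])
      have r2 : relu (1 - b₂) = 1 - b₂ := max_eq_left (le_of_lt hb₂pos)
      rw [r1, r2, div_self (ne_of_gt hb₂pos)]
      simp
  · intro t ht1 ht2
    rw [hf, hI₁, hI₂]
    have h1 : ∑ i ∈ (Finset.Icc 1 N).filter (fun i => (1 : ℝ) / 2 ≤ x i),
        hat h (x i) t ≤ b₁ := by
      apply sum_le _ _ _ hb₁.1
      intro i hi
      obtain ⟨him, hip⟩ := Finset.mem_filter.mp hi
      exact hat_le hhpos hb₁.1 (ht1 i him hip)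
    have h2 : ∑ i ∈ (Finset.Icc 1 N).filter (fun i => x i < (1 : ℝ) / 2),
        hat h (x i) t ≤ b₂ := by
      apply sum_le _ _ _ hb₂.1
      intro i hi
      obtain ⟨him, hip⟩ := Finset.mem_filter.mp hi
      exact hat_le hhpos hb₂.1 (ht2 i him hip)
    have r1 : relu ((∑ i ∈ (Finset.Icc 1 N).filter (fun i => (1 : ℝ) / 2 ≤ x i),
        hat h (x i) t) - b₁) = 0 := max_eq_right (by linarith)
    have r2 : relu ((∑ i ∈ (Finset.Icc 1 N).filter (fun i => x i < (1 : ℝ) / 2),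
        hat h (x i) t) - b₂) = 0 := max_eq_right (by linarith)
    rw [r1, r2]
    simp
end

section
/- Let α ∈ ℝ with α ≠ 1, let σ_α : ℝ → ℝ be the Parametric ReLU defined by σ_α(x) = α·x for x < 0 and σ_α(x) = x for x ≥ 0, and let h > 0. Then for every x ∈ ℝ, (σ_α(x + h) − 2·σ_α(x) + σ_α(x − h))/((1 − α)·h) = max(0, 1 − |x|/h); that is, it equals 0 for x < −h, equals 1 + x/h for −h ≤ x < 0, equals 1 − x/h for 0 ≤ x < h, and equals 0 for x ≥ h. -/
/-- The Parametric ReLU activation function with parameter `α`. -/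
noncomputable def prelu (α x : ℝ) : ℝ := if x < 0 then α * x else x

/-- three Parametric ReLU neurons reproduce the hat basis function. -/
theorem stmt_14 (α : ℝ) (hα : α ≠ 1) (h : ℝ) (hh : 0 < h) :
    ∀ x : ℝ,
      (prelu α (x + h) - 2 * prelu α x + prelu α (x - h)) / ((1 - α) * h)
        = max 0 (1 - |x| / h) ∧
      (x < -h → (prelu α (x + h) - 2 * prelu α x + prelu α (x - h)) / ((1 - α) * h) = 0) ∧
      (-h ≤ x → x < 0 →
        (prelu α (x + h) - 2 * prelu α x + prelu α (x - h)) / ((1 - α) * h) = 1 + x / h) ∧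
      (0 ≤ x → x < h →
        (prelu α (x + h) - 2 * prelu α x + prelu α (x - h)) / ((1 - α) * h) = 1 - x / h) ∧
      (h ≤ x → (prelu α (x + h) - 2 * prelu α x + prelu α (x - h)) / ((1 - α) * h) = 0) := by
  have h1α : (1 : ℝ) - α ≠ 0 := sub_ne_zero.mpr (Ne.symm hα)
  have hhne : h ≠ 0 := ne_of_gt hh
  intro x
  have key : (prelu α (x + h) - 2 * prelu α x + prelu α (x - h)) / ((1 - α) * h)
      = max 0 (1 - |x| / h) := by
    unfold prelu
    rcases lt_or_ge x (-h) with h1 | h1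
    · rw [if_pos (by linarith), if_pos (by linarith), if_pos (by linarith)]
      have habs : |x| = -x := abs_of_neg (by linarith)
      rw [habs]
      have : max 0 (1 - -x / h) = 0 := by
        apply max_eq_left
        rw [sub_nonpos, le_div_iff₀ hh]; linarith
      rw [this]
      field_simp
      ring
    · rcases lt_or_ge x 0 with h2 | h2
      · rw [if_neg (by linarith), if_pos h2, if_pos (by linarith)]
        have habs : |x| = -x := abs_of_neg h2
        rw [habs]
        have : max 0 (1 - -x / h) = 1 - -x / h := by
          apply max_eq_right
          rw [sub_nonneg, div_le_one hh]; linarith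
        rw [this]
        field_simp
        ring
      · rcases lt_or_ge x h with h3 | h3
        · rw [if_neg (by linarith), if_neg (by linarith), if_pos (by linarith)]
          have habs : |x| = x := abs_of_nonneg h2
          rw [habs]
          have : max 0 (1 - x / h) = 1 - x / h := by
            apply max_eq_right
            rw [sub_nonneg, div_le_one hh]; linarith
          rw [this]
          field_simp
          ring
        · rw [if_neg (by linarith), if_neg (by linarith), if_neg (by linarith)]
          have habs : |x| = x := abs_of_nonneg h2
          rw [habs]
          have : max 0 (1 - x / h) = 0 := by
            apply max_eq_left
            rw [sub_nonpos, le_div_iff₀ hh]; linarith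
          rw [this]
          field_simp
          ring
  refine ⟨key, ?_, ?_, ?_, ?_⟩
  · intro h1
    rw [key, abs_of_neg (by linarith)]
    apply max_eq_left
    rw [sub_nonpos, le_div_iff₀ hh]; linarith
  · intro h1 h2
    rw [key, abs_of_neg h2]
    have : max 0 (1 - -x / h) = 1 - -x / h := by
      apply max_eq_right
      rw [sub_nonneg, div_le_one hh]; linarith
    rw [this]; ring
  · intro h1 h2
    rw [key, abs_of_nonneg h1]
    apply max_eq_right
    rw [sub_nonneg, div_le_one hh]; linarith
  · intro h1
    rw [key, abs_of_nonneg (by linarith)]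
    apply max_eq_left
    rw [sub_nonpos, le_div_iff₀ hh]; linarith
end

section
/- Let σ(t) = 1/(1 + e^{−t}) be the logistic sigmoid, let N ≥ 2 be an integer, set x_i = (i−1)/(N−1) for i = 1, …, N, and let y₁, …, y_N ∈ ℝ. Then for every ε > 0 there exist K > 0, L > 0, and b ∈ (0, 1) such that the function f₂(x) := Σ_{i=1}^{N} y_i · σ(L·(φ_K(x − x_i) − b)/(1 − b)), where φ_K(u) = (σ(K·u + 1) − σ(K·u − 1))/(σ(1) − σ(−1)), satisfies |f₂(x_i) − y_i| < ε for every i = 1, …, N, and |f₂(x)| ≤ ε for every x ∈ [0, 1] with min_i |x − x_i| > ε. -/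
/-- The logistic sigmoid function. -/
noncomputable def sig (t : ℝ) : ℝ := 1 / (1 + Real.exp (-t))

/-- The sigmoid 'spike' basis function built from two sigmoid neurons. -/
noncomputable def spike (K u : ℝ) : ℝ :=
  (sig (K * u + 1) - sig (K * u - 1)) / (sig 1 - sig (-1))

lemma sig_pos (t : ℝ) : 0 < sig t := by unfold sig; positivity

lemma sig_lt_one (t : ℝ) : sig t < 1 := by
  unfold sig
  rw [div_lt_one (by positivity)]
  nlinarith [Real.exp_pos (-t)]

lemma sig_mono : Monotone sig := by
  intro a b hab
  unfold sig
  have h1 : Real.exp (-b) ≤ Real.exp (-a) := Real.exp_le_exp.2 (by linarith)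
  apply one_div_le_one_div_of_le (by positivity)
  linarith

lemma sig_neg_one_lt : sig (-1) < sig 1 := by
  unfold sig
  rw [neg_neg]
  apply one_div_lt_one_div_of_lt (by positivity)
  have : Real.exp (-1) < Real.exp 1 := Real.exp_lt_exp.2 (by norm_num)
  linarith

lemma sig_le_exp (t : ℝ) : sig t ≤ Real.exp t := by
  unfold sig
  rw [div_le_iff₀ (by positivity)]
  have h : Real.exp t * Real.exp (-t) = 1 := by rw [← Real.exp_add]; simp
  nlinarith [Real.exp_pos t]

lemma one_sub_sig (t : ℝ) : 1 - sig t = sig (-t) := by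
  unfold sig
  rw [neg_neg]
  have h : Real.exp t * Real.exp (-t) = 1 := by rw [← Real.exp_add]; simp
  have h1 : (0:ℝ) < 1 + Real.exp (-t) := by positivity
  have h2 : (0:ℝ) < 1 + Real.exp t := by positivity
  field_simp
  nlinarith

lemma spike_zero (K : ℝ) : spike K 0 = 1 := by
  have hc : sig 1 - sig (-1) ≠ 0 := ne_of_gt (sub_pos.2 sig_neg_one_lt)
  unfold spike
  rw [mul_zero, zero_add, zero_sub, div_self hc]

lemma spike_le (K u d : ℝ) (hK : 0 < K) (hd : 0 < d) (hu : d ≤ |u|) :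
    spike K u ≤ sig (1 - K * d) / (sig 1 - sig (-1)) := by
  have hc : 0 < sig 1 - sig (-1) := sub_pos.2 sig_neg_one_lt
  have key : sig (K * u + 1) - sig (K * u - 1) ≤ sig (1 - K * d) := by
    rcases le_abs.1 hu with h | h
    · -- d ≤ u
      have h1 : sig (K * u + 1) < 1 := sig_lt_one _
      have h2 : 1 - sig (K * u - 1) = sig (1 - K * u) := by
        have := one_sub_sig (K * u - 1)
        rwa [show -(K * u - 1) = 1 - K * u by ring] at this
      have h3 : sig (1 - K * u) ≤ sig (1 - K * d) := sig_mono (by nlinarith)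
      linarith
    · -- d ≤ -u
      have h1 : 0 < sig (K * u - 1) := sig_pos _
      have h2 : sig (K * u + 1) ≤ sig (1 - K * d) := sig_mono (by nlinarith)
      linarith
  unfold spike
  gcongr

/-- 1-D sigmoid network with near-zero training loss that is
nevertheless nearly 0 away from the training points. -/
theorem stmt_17 (N : ℕ) (hN : 2 ≤ N)
    (x : ℕ → ℝ) (hx : ∀ i, x i = ((i : ℝ) - 1) / ((N : ℝ) - 1))
    (y : ℕ → ℝ) :
    ∀ ε : ℝ, 0 < ε →
      ∃ K > (0 : ℝ), ∃ L > (0 : ℝ), ∃ b : ℝ, 0 < b ∧ b < 1 ∧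
        (∀ i ∈ Finset.Icc 1 N,
          |(∑ k ∈ Finset.Icc 1 N,
              y k * sig (L * (spike K (x i - x k) - b) / (1 - b))) - y i| < ε) ∧
        (∀ t ∈ Set.Icc (0 : ℝ) 1,
          (∀ i ∈ Finset.Icc 1 N, ε < |t - x i|) →
          |∑ k ∈ Finset.Icc 1 N,
              y k * sig (L * (spike K (t - x k) - b) / (1 - b))| ≤ ε) := by
  intro ε hε
  have hc : 0 < sig 1 - sig (-1) := sub_pos.2 sig_neg_one_lt
  have hc1 : sig 1 - sig (-1) < 1 := by
    have := sig_lt_one 1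
    have := sig_pos (-1)
    linarith
  set c : ℝ := sig 1 - sig (-1) with hc_def
  have hN1 : (1:ℝ) ≤ (N:ℝ) - 1 := by
    have : (2:ℝ) ≤ (N:ℝ) := by exact_mod_cast hN
    linarith
  set d : ℝ := min ε (1 / ((N:ℝ) - 1)) with hd_def
  have hd : 0 < d := lt_min hε (by positivity)
  have hlog : Real.log (c / 4) < 0 := Real.log_neg (by positivity) (by linarith)
  set K : ℝ := (1 - Real.log (c / 4)) / d with hK_def
  have hK : 0 < K := div_pos (by linarith) hd
  have hKd : 1 - K * d = Real.log (c / 4) := by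
    have : K * d = 1 - Real.log (c / 4) := div_mul_cancel₀ _ hd.ne'
    linarith
  -- the spike is at most 1/4 whenever |u| ≥ d
  have spike_small : ∀ u : ℝ, d ≤ |u| → spike K u ≤ 1 / 4 := by
    intro u hu
    have h1 := spike_le K u d hK hd hu
    rw [hKd] at h1
    have h2 : sig (Real.log (c / 4)) ≤ c / 4 := by
      have := sig_le_exp (Real.log (c / 4))
      rwa [Real.exp_log (by positivity)] at this
    have h3 : sig (Real.log (c / 4)) / c ≤ (c / 4) / c := by gcongr
    have h4 : (c / 4) / c = 1 / 4 := by field_simp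
    calc spike K u ≤ sig (Real.log (c/4)) / c := h1
      _ ≤ (c/4)/c := h3
      _ = 1/4 := h4
  set S : ℝ := ∑ k ∈ Finset.Icc 1 N, |y k| with hS_def
  have hS : 0 ≤ S := Finset.sum_nonneg fun k _ => abs_nonneg _
  set M : ℝ := (2 * (S + 1)) / ε with hM_def
  have hM : 0 < M := by positivity
  set L : ℝ := 2 * (|Real.log M| + 1) with hL_def
  have hL : 0 < L := by positivity
  set E : ℝ := Real.exp (-(L / 2)) with hE_def
  have hE0 : 0 < E := Real.exp_pos _
  have hE : E < ε / (2 * (S + 1)) := by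
    have h1 : E ≤ Real.exp (-Real.log M - 1) := by
      apply Real.exp_le_exp.2
      have := le_abs_self (Real.log M)
      rw [hL_def]; linarith
    have h2 : Real.exp (-Real.log M - 1) = (1 / M) * Real.exp (-1) := by
      rw [show -Real.log M - 1 = -Real.log M + -1 by ring, Real.exp_add,
        Real.exp_neg, Real.exp_log hM, one_div]
    have h3 : Real.exp (-1) < 1 := Real.exp_lt_one_iff.2 (by norm_num)
    have h4 : (1 / M) * Real.exp (-1) < 1 / M := by
      nlinarith [one_div_pos.2 hM, Real.exp_pos (-1)]
    have h5 : 1 / M = ε / (2 * (S + 1)) := by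
      rw [hM_def]; field_simp
    linarith
  -- the key per-term bound
  have term_bound : ∀ u : ℝ, d ≤ |u| →
      sig (L * (spike K u - 1/2) / (1 - 1/2)) ≤ E := by
    intro u hu
    have hsp := spike_small u hu
    have harg : L * (spike K u - 1/2) / (1 - 1/2) ≤ -(L/2) := by
      rw [show (1:ℝ) - 1/2 = 1/2 by norm_num, div_div_eq_mul_div, div_le_iff₀ (by norm_num)]
      nlinarith
    calc sig (L * (spike K u - 1/2) / (1 - 1/2)) ≤ sig (-(L/2)) := sig_mono harg
      _ ≤ Real.exp (-(L/2)) := sig_le_exp _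
  -- separation of training points
  have sep : ∀ i ∈ Finset.Icc 1 N, ∀ k ∈ Finset.Icc 1 N, i ≠ k → d ≤ |x i - x k| := by
    intro i _ k _ hik
    rw [hx i, hx k, div_sub_div_same, abs_div, abs_of_pos (by linarith : (0:ℝ) < (N:ℝ)-1)]
    have h1 : (1:ℝ) ≤ |((i:ℝ) - 1) - ((k:ℝ) - 1)| := by
      rw [show ((i:ℝ) - 1) - ((k:ℝ) - 1) = (i:ℝ) - (k:ℝ) by ring]
      rcases lt_or_gt_of_ne hik with h | h
      · have : (i:ℝ) + 1 ≤ (k:ℝ) := by exact_mod_cast h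
        rw [abs_sub_comm, abs_of_pos (by linarith)]; linarith
      · have : (k:ℝ) + 1 ≤ (i:ℝ) := by exact_mod_cast h
        rw [abs_of_pos (by linarith)]; linarith
    have h2 : d ≤ 1 / ((N:ℝ) - 1) := min_le_right _ _
    calc d ≤ 1 / ((N:ℝ) - 1) := h2
      _ ≤ |((i:ℝ) - 1) - ((k:ℝ) - 1)| / ((N:ℝ) - 1) := by gcongr
  refine ⟨K, hK, L, hL, 1/2, by norm_num, by norm_num, ?_, ?_⟩
  · -- at training points
    intro i hi
    have hsplit : (∑ k ∈ Finset.Icc 1 N,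
        y k * sig (L * (spike K (x i - x k) - 1/2) / (1 - 1/2)))
        = y i * sig (L * (spike K (x i - x i) - 1/2) / (1 - 1/2)) +
          ∑ k ∈ (Finset.Icc 1 N).erase i,
            y k * sig (L * (spike K (x i - x k) - 1/2) / (1 - 1/2)) :=
      (Finset.add_sum_erase _ _ hi).symm
    have hii : sig (L * (spike K (x i - x i) - 1/2) / (1 - 1/2)) = sig L := by
      rw [sub_self, spike_zero]
      norm_num
    have hrest : |∑ k ∈ (Finset.Icc 1 N).erase i,
        y k * sig (L * (spike K (x i - x k) - 1/2) / (1 - 1/2))| ≤ S * E := by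
      calc |∑ k ∈ (Finset.Icc 1 N).erase i,
            y k * sig (L * (spike K (x i - x k) - 1/2) / (1 - 1/2))|
          ≤ ∑ k ∈ (Finset.Icc 1 N).erase i,
            |y k * sig (L * (spike K (x i - x k) - 1/2) / (1 - 1/2))| :=
            Finset.abs_sum_le_sum_abs _ _
        _ ≤ ∑ k ∈ (Finset.Icc 1 N).erase i, |y k| * E := by
            apply Finset.sum_le_sum
            intro k hk
            rw [abs_mul, abs_of_pos (sig_pos _)]
            have hd' := sep i hi k (Finset.mem_of_mem_erase hk)
              (Ne.symm (Finset.ne_of_mem_erase hk))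
            exact mul_le_mul_of_nonneg_left (term_bound _ hd') (abs_nonneg _)
        _ ≤ (∑ k ∈ Finset.Icc 1 N, |y k|) * E := by
            rw [← Finset.sum_mul]
            apply mul_le_mul_of_nonneg_right _ hE0.le
            exact Finset.sum_le_sum_of_subset_of_nonneg (Finset.erase_subset _ _)
              (fun k _ _ => abs_nonneg _)
        _ = S * E := rfl
    have hyi : |y i| ≤ S := by
      exact Finset.single_le_sum (f := fun k => |y k|) (fun k _ => abs_nonneg _) hi
    have hsigL : 1 - sig L ≤ E := by
      have h1 : 1 - sig L = sig (-L) := one_sub_sig L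
      have h2 : sig (-L) ≤ sig (-(L/2)) := sig_mono (by linarith)
      have h3 : sig (-(L/2)) ≤ E := sig_le_exp _
      linarith
    have hsigL0 : 0 ≤ 1 - sig L := by linarith [sig_lt_one L]
    rw [hsplit, hii]
    have : |y i * sig L + (∑ k ∈ (Finset.Icc 1 N).erase i,
        y k * sig (L * (spike K (x i - x k) - 1/2) / (1 - 1/2))) - y i|
        ≤ |y i| * (1 - sig L) + S * E := by
      calc |y i * sig L + (∑ k ∈ (Finset.Icc 1 N).erase i,
            y k * sig (L * (spike K (x i - x k) - 1/2) / (1 - 1/2))) - y i|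
          ≤ |y i * sig L - y i| + |∑ k ∈ (Finset.Icc 1 N).erase i,
            y k * sig (L * (spike K (x i - x k) - 1/2) / (1 - 1/2))| := by
            rw [show y i * sig L + (∑ k ∈ (Finset.Icc 1 N).erase i,
              y k * sig (L * (spike K (x i - x k) - 1/2) / (1 - 1/2))) - y i
              = (y i * sig L - y i) + ∑ k ∈ (Finset.Icc 1 N).erase i,
                y k * sig (L * (spike K (x i - x k) - 1/2) / (1 - 1/2)) by ring]
            exact abs_add_le _ _
        _ ≤ |y i| * (1 - sig L) + S * E := by
            have : |y i * sig L - y i| = |y i| * (1 - sig L) := by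
              rw [show y i * sig L - y i = -(y i * (1 - sig L)) by ring, abs_neg, abs_mul,
                abs_of_nonneg hsigL0]
            linarith
    have hfin : |y i| * (1 - sig L) + S * E ≤ 2 * (S + 1) * E := by
      have h1 : |y i| * (1 - sig L) ≤ S * E := by
        calc |y i| * (1 - sig L) ≤ S * (1 - sig L) :=
            mul_le_mul_of_nonneg_right hyi hsigL0
          _ ≤ S * E := mul_le_mul_of_nonneg_left hsigL hS
      have h2 : 2 * S * E ≤ 2 * (S + 1) * E := mul_le_mul_of_nonneg_right (by linarith) hE0.le
      linarith
    have hfin2 : 2 * (S + 1) * E < ε := by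
      calc 2 * (S + 1) * E < 2 * (S + 1) * (ε / (2 * (S + 1))) :=
            mul_lt_mul_of_pos_left hE (by positivity)
        _ = ε := by field_simp
    linarith
  · -- away from training points
    intro t _ hfar
    have hbd : ∀ k ∈ Finset.Icc 1 N, d ≤ |t - x k| := by
      intro k hk
      have := hfar k hk
      have hd' : d ≤ ε := min_le_left _ _
      linarith
    calc |∑ k ∈ Finset.Icc 1 N, y k * sig (L * (spike K (t - x k) - 1/2) / (1 - 1/2))|
        ≤ ∑ k ∈ Finset.Icc 1 N, |y k * sig (L * (spike K (t - x k) - 1/2) / (1 - 1/2))| :=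
          Finset.abs_sum_le_sum_abs _ _
      _ ≤ ∑ k ∈ Finset.Icc 1 N, |y k| * E := by
          apply Finset.sum_le_sum
          intro k hk
          rw [abs_mul, abs_of_pos (sig_pos _)]
          exact mul_le_mul_of_nonneg_left (term_bound _ (hbd k hk)) (abs_nonneg _)
      _ = S * E := by rw [← Finset.sum_mul]
      _ ≤ 2 * (S + 1) * E := mul_le_mul_of_nonneg_right (by linarith) hE0.le
      _ ≤ ε := by
          have h : 2 * (S + 1) * E < ε := by
            calc 2 * (S + 1) * E < 2 * (S + 1) * (ε / (2 * (S + 1))) :=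
                mul_lt_mul_of_pos_left hE (by positivity)
              _ = ε := by field_simp
          linarith
end

section
/- Let σ(t) = 1/(1 + e^{−t}) be the logistic sigmoid, let d ≥ 1 and N ≥ 2 be integers, set grid coordinates x_{j,i} = (i−1)/(N−1) for i = 1, …, N in each dimension j = 1, …, d, and let y_{i₁,…,i_d} ∈ ℝ for all multi-indices. Then for every ε > 0 there exist K > 0, L > 0, and b ∈ (d−1, d) such that the function f(x) := Σ_{i₁,…,i_d=1}^{N} y_{i₁,…,i_d} · σ(L·(Φ_{i₁,…,i_d}(x) − b)/(d − b)), where Φ_{i₁,…,i_d}(x) = Σ_{j=1}^{d} φ_K(x_j − x_{j,i_j}) and φ_K(u) = (σ(K·u + 1) − σ(K·u − 1))/(σ(1) − σ(−1)), satisfies |f(x_{1,i₁}, …, x_{d,i_d}) − y_{i₁,…,i_d}| < ε for every multi-index, and |f(x)| ≤ ε for every x ∈ [0, 1]^d whose sup-norm distance to the grid {(x_{1,i₁}, …, x_{d,i_d})} exceeds ε. -/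
lemma sig_neg (t : ℝ) : sig (-t) = 1 - sig t := by
  unfold sig
  rw [neg_neg]
  have h1 := Real.exp_pos t
  have h2 := Real.exp_pos (-t)
  have h3 : Real.exp t * Real.exp (-t) = 1 := by
    rw [← Real.exp_add]; simp
  field_simp
  nlinarith

lemma c_pos : 0 < sig 1 - sig (-1) := by
  have : sig (-1) < sig 1 := by
    unfold sig
    simp only [neg_neg]
    apply one_div_lt_one_div_of_lt (by positivity)
    have := Real.exp_lt_exp.mpr (show (-1:ℝ) < 1 by norm_num)
    linarith
  linarith

lemma key_sig_diff (t : ℝ) : sig (t + 1) - sig (t - 1) ≤ sig 1 - sig (-1) := by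
  unfold sig
  simp only [neg_neg]
  have e1 : -(t + 1) = -t + -1 := by ring
  have e2 : -(t - 1) = -t + 1 := by ring
  rw [e1, e2, Real.exp_add, Real.exp_add]
  set p := Real.exp (-t) with hp
  set q := Real.exp (-1:ℝ) with hq
  set r := Real.exp (1:ℝ) with hr
  have hpp : 0 < p := Real.exp_pos _
  have hqq : 0 < q := Real.exp_pos _
  have hrr : 0 < r := Real.exp_pos _
  have hqr : q * r = 1 := by rw [hq, hr, ← Real.exp_add]; simp
  have hrq : q < r := Real.exp_lt_exp.mpr (by norm_num)
  rw [div_sub_div _ _ (by positivity) (by positivity),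
      div_sub_div _ _ (by positivity) (by positivity),
      div_le_div_iff₀ (by positivity) (by positivity)]
  have e3 : (1 + p*q)*(1 + p*r) - p*(1+q)*(1+r) = (1 - p)^2 + (p^2 - p)*(q*r - 1) := by ring
  rw [hqr] at e3
  have hkey : p*(1+q)*(1+r) ≤ (1 + p*q)*(1 + p*r) := by nlinarith [sq_nonneg (1 - p)]
  have h5 : (r - q)*(p*(1+q)*(1+r)) ≤ (r - q)*((1 + p*q)*(1 + p*r)) :=
    mul_le_mul_of_nonneg_left hkey (by linarith)
  nlinarith [h5]

lemma spike_le_one (K u : ℝ) : spike K u ≤ 1 := by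
  unfold spike
  rw [div_le_one c_pos]
  exact key_sig_diff (K * u)

lemma spike_far {K η u : ℝ} (hK : 0 ≤ K) (hη : 0 < η) (h : η ≤ |u|) :
    spike K u ≤ sig (1 - K * η) / (sig 1 - sig (-1)) := by
  rcases le_or_gt 0 u with hu | hu
  · have hu' : η ≤ u := by rwa [abs_of_nonneg hu] at h
    unfold spike
    gcongr
    · exact c_pos.le
    have h1 : sig (1 - K * u) ≤ sig (1 - K * η) := by
      apply sig_mono
      nlinarith
    have h2 : sig (K * u + 1) ≤ 1 := (sig_lt_one _).le
    have h3 : sig (-(K * u - 1)) = 1 - sig (K * u - 1) := sig_neg _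
    have h4 : -(K * u - 1) = 1 - K * u := by ring
    rw [h4] at h3
    linarith
  · have hu' : u ≤ -η := by
      rw [abs_of_neg hu] at h; linarith
    unfold spike
    gcongr
    · exact c_pos.le
    have h1 : sig (K * u + 1) ≤ sig (1 - K * η) := by
      apply sig_mono
      nlinarith
    linarith [sig_pos (K * u - 1)]

/-- d-dimensional sigmoid network with near-zero training loss
that is nevertheless nearly 0 away from the training grid. -/
theorem stmt_18 (d N : ℕ) (hd : 0 < d) (hN : 2 ≤ N)
    (xg : ℕ → ℝ) (hxg : ∀ i, xg i = ((i : ℝ) - 1) / ((N : ℝ) - 1))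
    (y : (Fin d → ℕ) → ℝ) :
    ∀ ε : ℝ, 0 < ε →
      ∃ K > (0 : ℝ), ∃ L > (0 : ℝ), ∃ b : ℝ, (d : ℝ) - 1 < b ∧ b < (d : ℝ) ∧
        (∀ ι : Fin d → ℕ, (∀ j, ι j ∈ Finset.Icc 1 N) →
          |(∑ κ ∈ Fintype.piFinset (fun _ : Fin d => Finset.Icc 1 N),
              y κ * sig (L * ((∑ j : Fin d, spike K (xg (ι j) - xg (κ j))) - b)
                / ((d : ℝ) - b))) - y ι| < ε) ∧
        (∀ x : Fin d → ℝ, (∀ j, x j ∈ Set.Icc (0 : ℝ) 1) →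
          (∀ ι : Fin d → ℕ, (∀ j, ι j ∈ Finset.Icc 1 N) →
            ∃ j : Fin d, ε < |x j - xg (ι j)|) →
          |∑ κ ∈ Fintype.piFinset (fun _ : Fin d => Finset.Icc 1 N),
              y κ * sig (L * ((∑ j : Fin d, spike K (x j - xg (κ j))) - b)
                / ((d : ℝ) - b))| ≤ ε) := by
  intro ε hε
  have hN1 : (1:ℝ) ≤ (N:ℝ) - 1 := by
    have : (2:ℝ) ≤ (N:ℝ) := by exact_mod_cast hN
    linarith
  set c := sig 1 - sig (-1) with hc
  have hc0 : 0 < c := c_pos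
  set η := min ε (1/((N:ℝ)-1)) with hηdef
  have hη : 0 < η := lt_min hε (by positivity)
  set K := max 1 ((1 + Real.log (4/c))/η) with hKdef
  have hK : (0:ℝ) < K := lt_of_lt_of_le one_pos (le_max_left _ _)
  -- spike is small at distance ≥ η
  have hKη : ∀ u : ℝ, η ≤ |u| → spike K u ≤ 1/4 := by
    intro u hu
    have h1 := spike_far (K := K) hK.le hη hu
    have h2 : 1 + Real.log (4/c) ≤ K * η := by
      have h3 : (1 + Real.log (4/c))/η ≤ K := le_max_right _ _
      calc 1 + Real.log (4/c) = ((1 + Real.log (4/c))/η) * η := by field_simp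
        _ ≤ K * η := mul_le_mul_of_nonneg_right h3 hη.le
    have h4 : sig (1 - K*η) ≤ c/4 := by
      calc sig (1 - K*η) ≤ Real.exp (1 - K*η) := sig_le_exp _
        _ ≤ Real.exp (Real.log (c/4)) := by
            apply Real.exp_le_exp.mpr
            have h5 : Real.log (4/c) = - Real.log (c/4) := by
              rw [← Real.log_inv]
              congr 1
              field_simp
            linarith
        _ = c/4 := Real.exp_log (by positivity)
    calc spike K u ≤ sig (1 - K*η)/c := h1
      _ ≤ (c/4)/c := by gcongr
      _ = 1/4 := by field_simp
  set M := (∑ κ ∈ Fintype.piFinset (fun _ : Fin d => Finset.Icc 1 N), |y κ|) + 1 with hMdef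
  have hM1 : (∑ κ ∈ Fintype.piFinset (fun _ : Fin d => Finset.Icc 1 N), |y κ|) = M - 1 := by
    rw [hMdef]; ring
  have hMsum : (0:ℝ) ≤ M - 1 := by
    rw [← hM1]
    exact Finset.sum_nonneg fun κ _ => abs_nonneg _
  have hM0 : 0 < M := by linarith
  set L := max 1 (2 * Real.log (M/ε)) with hLdef
  have hL : (0:ℝ) < L := lt_of_lt_of_le one_pos (le_max_left _ _)
  have hsigL : sig (-(L/2)) ≤ ε / M := by
    calc sig (-(L/2)) ≤ Real.exp (-(L/2)) := sig_le_exp _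
      _ ≤ Real.exp (Real.log (ε/M)) := by
          apply Real.exp_le_exp.mpr
          have h1 : 2*Real.log (M/ε) ≤ L := le_max_right _ _
          have h2 : Real.log (M/ε) = - Real.log (ε/M) := by
            rw [← Real.log_inv]
            congr 1
            field_simp
          linarith
      _ = ε/M := Real.exp_log (by positivity)
  have hs0 : 0 < sig (-(L/2)) := sig_pos _
  have hMε : (M - 1) * sig (-(L/2)) < ε := by
    have h1 : (M - 1) * sig (-(L/2)) ≤ (M - 1) * (ε/M) := by
      exact mul_le_mul_of_nonneg_left hsigL hMsum
    have h2 : (M - 1) * (ε/M) < M * (ε/M) := by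
      apply mul_lt_mul_of_pos_right (by linarith) (by positivity)
    have h3 : M * (ε/M) = ε := by field_simp
    linarith
  have hdb : (d:ℝ) - ((d:ℝ) - 1/2) = 1/2 := by ring
  -- if some coordinate is far, the sigmoid output is small
  have hfar : ∀ (x : Fin d → ℝ) (κ : Fin d → ℕ), (∃ j, η ≤ |x j - xg (κ j)|) →
      sig (L * ((∑ j : Fin d, spike K (x j - xg (κ j))) - ((d:ℝ) - 1/2))
        / ((d:ℝ) - ((d:ℝ) - 1/2))) ≤ sig (-(L/2)) := by
    intro x κ ⟨j₀, hj₀⟩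
    have hsum : (∑ j : Fin d, spike K (x j - xg (κ j))) ≤ (d:ℝ) - 3/4 := by
      have h1 : ∑ j ∈ Finset.univ.erase j₀, spike K (x j - xg (κ j)) ≤ ((d - 1 : ℕ):ℝ) := by
        have h0 := Finset.sum_le_card_nsmul (Finset.univ.erase j₀)
          (fun j => spike K (x j - xg (κ j))) 1 (fun j _ => spike_le_one _ _)
        simpa [Finset.card_erase_of_mem, Finset.card_univ] using h0
      have h2 := hKη _ hj₀
      have h3 := Finset.sum_erase_add Finset.univ
        (fun j => spike K (x j - xg (κ j))) (Finset.mem_univ j₀)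
      have hd1 : ((d - 1 : ℕ):ℝ) = (d:ℝ) - 1 := by
        have : (1:ℕ) ≤ d := hd
        push_cast [this]
        ring
      rw [← h3]
      rw [hd1] at h1
      linarith
    rw [hdb]
    apply sig_mono
    have h5 : (∑ j : Fin d, spike K (x j - xg (κ j))) - ((d:ℝ) - 1/2) ≤ -(1/4) := by
      linarith
    have h6 : L * ((∑ j : Fin d, spike K (x j - xg (κ j))) - ((d:ℝ) - 1/2)) ≤ L * (-(1/4)) :=
      mul_le_mul_of_nonneg_left h5 hL.le
    rw [div_le_iff₀ (by norm_num : (0:ℝ) < 1/2)]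
    nlinarith
  -- distinct grid points are at distance ≥ η
  have hgrid : ∀ i i' : ℕ, i ≠ i' → η ≤ |xg i - xg i'| := by
    intro i i' hne
    rw [hxg, hxg, div_sub_div_same]
    have h1 : (1:ℝ) ≤ |(i:ℝ) - (i':ℝ)| := by
      have h2 : ((i:ℤ) - (i':ℤ)) ≠ 0 := sub_ne_zero.mpr (by exact_mod_cast hne)
      have h3 := Int.one_le_abs h2
      have h4 : (1:ℝ) ≤ |(((i:ℤ) - (i':ℤ) : ℤ):ℝ)| := by
        rw [← Int.cast_abs]
        exact_mod_cast h3
      push_cast at h4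
      exact h4
    have he : ((i:ℝ) - 1) - ((i':ℝ) - 1) = (i:ℝ) - (i':ℝ) := by ring
    rw [he, abs_div, abs_of_pos (show (0:ℝ) < (N:ℝ) - 1 by linarith)]
    calc η ≤ 1/((N:ℝ)-1) := min_le_right _ _
      _ ≤ |(i:ℝ) - (i':ℝ)|/((N:ℝ)-1) := by gcongr
  refine ⟨K, hK, L, hL, (d:ℝ) - 1/2, by linarith, by linarith, ?_, ?_⟩
  · -- training grid: near interpolation
    intro ι hι
    have hιmem : ι ∈ Fintype.piFinset (fun _ : Fin d => Finset.Icc 1 N) := by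
      rw [Fintype.mem_piFinset]; exact hι
    have hdiag : (∑ j : Fin d, spike K (xg (ι j) - xg (ι j))) = (d:ℝ) := by
      simp [sub_self, spike_zero]
    have hσι : sig (L * ((∑ j : Fin d, spike K (xg (ι j) - xg (ι j))) - ((d:ℝ) - 1/2))
        / ((d:ℝ) - ((d:ℝ) - 1/2))) = sig L := by
      congr 1
      rw [hdiag]
      field_simp
    set F : (Fin d → ℕ) → ℝ := fun κ =>
      y κ * sig (L * ((∑ j : Fin d, spike K (xg (ι j) - xg (κ j))) - ((d:ℝ) - 1/2))
        / ((d:ℝ) - ((d:ℝ) - 1/2))) with hF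
    have hsplit := Finset.sum_erase_add
      (Fintype.piFinset (fun _ : Fin d => Finset.Icc 1 N)) F hιmem
    have hFι : F ι = y ι * sig L := by rw [hF]; simp only; rw [hσι]
    have herase : |∑ κ ∈ (Fintype.piFinset (fun _ : Fin d => Finset.Icc 1 N)).erase ι, F κ|
        ≤ ∑ κ ∈ (Fintype.piFinset (fun _ : Fin d => Finset.Icc 1 N)).erase ι,
            |y κ| * sig (-(L/2)) := by
      refine (Finset.abs_sum_le_sum_abs _ _).trans (Finset.sum_le_sum ?_)
      intro κ hκ
      have hκne : κ ≠ ι := (Finset.mem_erase.mp hκ).1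
      obtain ⟨j, hj⟩ := Function.ne_iff.mp hκne
      have hηj : η ≤ |xg (ι j) - xg (κ j)| := hgrid _ _ (fun h => hj h.symm)
      have hσ := hfar (fun j => xg (ι j)) κ ⟨j, hηj⟩
      rw [hF]
      simp only [abs_mul]
      exact mul_le_mul_of_nonneg_left
        (by rw [abs_of_pos (sig_pos _)]; exact hσ) (abs_nonneg _)
    have hsigLbig : 1 - sig L ≤ sig (-(L/2)) := by
      rw [← sig_neg]
      exact sig_mono (by linarith)
    have habs : |(∑ κ ∈ Fintype.piFinset (fun _ : Fin d => Finset.Icc 1 N), F κ) - y ι|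
        ≤ (M - 1) * sig (-(L/2)) := by
      rw [← hsplit, hFι]
      set S := ∑ κ ∈ (Fintype.piFinset (fun _ : Fin d => Finset.Icc 1 N)).erase ι, F κ with hS
      have e : S + y ι * sig L - y ι = S + -(y ι * (1 - sig L)) := by ring
      rw [e]
      have h7 : |S + -(y ι * (1 - sig L))| ≤ |S| + |y ι| * (1 - sig L) := by
        calc |S + -(y ι * (1 - sig L))| ≤ |S| + |-(y ι * (1 - sig L))| := abs_add_le _ _
          _ = |S| + |y ι| * (1 - sig L) := by
              rw [abs_neg, abs_mul,
                abs_of_nonneg (by linarith [sig_lt_one L] : (0:ℝ) ≤ 1 - sig L)]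
      have h8 : |y ι| * (1 - sig L) ≤ |y ι| * sig (-(L/2)) :=
        mul_le_mul_of_nonneg_left hsigLbig (abs_nonneg _)
      have h9 : (∑ κ ∈ (Fintype.piFinset (fun _ : Fin d => Finset.Icc 1 N)).erase ι,
            |y κ| * sig (-(L/2))) + |y ι| * sig (-(L/2)) = (M - 1) * sig (-(L/2)) := by
        rw [← hM1, ← Finset.sum_erase_add _ (fun κ => |y κ|) hιmem, add_mul, Finset.sum_mul]
      have h11 : |S| + |y ι| * (1 - sig L)
          ≤ (∑ κ ∈ (Fintype.piFinset (fun _ : Fin d => Finset.Icc 1 N)).erase ι,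
              |y κ| * sig (-(L/2))) + |y ι| * sig (-(L/2)) := add_le_add herase h8
      linarith [h7, h11, h9.ge, h9.le]
    calc |(∑ κ ∈ Fintype.piFinset (fun _ : Fin d => Finset.Icc 1 N), F κ) - y ι|
        ≤ (M - 1) * sig (-(L/2)) := habs
      _ < ε := hMε
  · -- away from grid: near zero
    intro x hx hfarx
    have h1 : ∀ κ ∈ Fintype.piFinset (fun _ : Fin d => Finset.Icc 1 N),
        |y κ * sig (L * ((∑ j : Fin d, spike K (x j - xg (κ j))) - ((d:ℝ) - 1/2))
          / ((d:ℝ) - ((d:ℝ) - 1/2)))| ≤ |y κ| * sig (-(L/2)) := by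
      intro κ hκ
      obtain ⟨j, hj⟩ := hfarx κ (Fintype.mem_piFinset.mp hκ)
      have hηj : η ≤ |x j - xg (κ j)| := le_trans (min_le_left _ _) hj.le
      have hσ := hfar x κ ⟨j, hηj⟩
      rw [abs_mul]
      exact mul_le_mul_of_nonneg_left
        (by rw [abs_of_pos (sig_pos _)]; exact hσ) (abs_nonneg _)
    calc |∑ κ ∈ Fintype.piFinset (fun _ : Fin d => Finset.Icc 1 N),
          y κ * sig (L * ((∑ j : Fin d, spike K (x j - xg (κ j))) - ((d:ℝ) - 1/2))
            / ((d:ℝ) - ((d:ℝ) - 1/2)))|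
        ≤ ∑ κ ∈ Fintype.piFinset (fun _ : Fin d => Finset.Icc 1 N), |y κ| * sig (-(L/2)) :=
          (Finset.abs_sum_le_sum_abs _ _).trans (Finset.sum_le_sum h1)
      _ = (M - 1) * sig (-(L/2)) := by rw [← Finset.sum_mul, hM1]
      _ ≤ ε := hMε.le
end

section
/- Let σ(t) = 1/(1 + e^{−t}) be the logistic sigmoid, let B > 0 and let 𝕄 be a positive integer. Then there exists a constant C > 0 (depending only on B and 𝕄) such that for every ε ∈ (0, 1] and every y ∈ ℝ with |y| ≤ B, the sequence defined by p₁ = ε·y and p_{n+1} = 4·σ(p_n) − 2 satisfies |(4·σ(p_𝕄) − 2)/ε − y| ≤ C·ε. -/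
lemma sig_key (t : ℝ) : |4 * sig t - 2 - t| ≤ 4 * t ^ 2 := by
  have hu0 : 0 < Real.exp (-t) := Real.exp_pos _
  rcases le_or_gt (|t|) 1 with h | h
  · have hb := Real.exp_bound (x := -t) (by rwa [abs_neg]) (n := 2) (by norm_num)
    have hs : (∑ i ∈ Finset.range 2, (-t) ^ i / (Nat.factorial i)) = 1 - t := by
      simp [Finset.sum_range_succ]; ring
    rw [hs] at hb
    have hb' : |Real.exp (-t) - (1 - t)| ≤ 3/4 * t ^ 2 := by
      rw [abs_neg, sq_abs] at hb
      norm_num at hb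
      linarith
    have heq : 4 * sig t - 2 - t = ((2 - t) - (2 + t) * Real.exp (-t)) / (1 + Real.exp (-t)) := by
      unfold sig; field_simp; ring
    rw [heq, abs_div, abs_of_pos (show (0:ℝ) < 1 + Real.exp (-t) by linarith)]
    have hN : |(2 - t) - (2 + t) * Real.exp (-t)| ≤ 4 * t ^ 2 := by
      have hrw : (2 - t) - (2 + t) * Real.exp (-t)
          = t ^ 2 - (2 + t) * (Real.exp (-t) - (1 - t)) := by ring
      rw [hrw]
      have h2t : |2 + t| ≤ 3 := by
        rw [abs_le] at h ⊢; constructor <;> linarith [h.1, h.2]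
      calc |t ^ 2 - (2 + t) * (Real.exp (-t) - (1 - t))|
          ≤ |t ^ 2| + |(2 + t) * (Real.exp (-t) - (1 - t))| := abs_sub _ _
        _ ≤ t ^ 2 + 3 * (3/4 * t ^ 2) := by
            rw [abs_mul, abs_of_nonneg (sq_nonneg t)]
            gcongr
        _ ≤ 4 * t ^ 2 := by nlinarith [sq_nonneg t]
    calc |(2 - t) - (2 + t) * Real.exp (-t)| / (1 + Real.exp (-t))
        ≤ |(2 - t) - (2 + t) * Real.exp (-t)| := div_le_self (abs_nonneg _) (by linarith)
      _ ≤ 4 * t ^ 2 := hN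
  · have hs1 : 0 < sig t := by unfold sig; positivity
    have hs2 : sig t < 1 := by
      unfold sig
      rw [div_lt_one (by positivity)]
      linarith
    have ht2 : 1 ≤ t ^ 2 := by nlinarith [sq_abs t]
    have htabs : |t| ≤ t ^ 2 := by nlinarith [sq_abs t, abs_nonneg t]
    calc |4 * sig t - 2 - t| ≤ |4 * sig t - 2| + |t| := abs_sub _ _
      _ ≤ 2 + t ^ 2 := by
          have : |4 * sig t - 2| ≤ 2 := by rw [abs_le]; constructor <;> linarith
          linarith
      _ ≤ 4 * t ^ 2 := by linarith

noncomputable def cseq (B : ℝ) : ℕ → ℝ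
  | 0 => 0
  | n + 1 => cseq B n + 4 * (B + cseq B n) ^ 2

lemma cseq_nonneg (B : ℝ) : ∀ n, 0 ≤ cseq B n
  | 0 => le_refl _
  | n + 1 => by
      have := cseq_nonneg B n
      simp only [cseq]
      positivity

/-- the sigmoid instance of the layer-extension trick computes the
original output `y` up to `O(ε)`. -/
theorem stmt_19 (B : ℝ) (hB : 0 < B) (M : ℕ) (hM : 1 ≤ M) :
    ∃ C > (0 : ℝ), ∀ ε : ℝ, ε ∈ Set.Ioc (0 : ℝ) 1 → ∀ y : ℝ, |y| ≤ B →
      ∀ p : ℕ → ℝ, p 1 = ε * y →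
        (∀ n, 1 ≤ n → p (n + 1) = 4 * sig (p n) - 2) →
        |(4 * sig (p M) - 2) / ε - y| ≤ C * ε := by
  refine ⟨cseq B M + 1, by linarith [cseq_nonneg B M], ?_⟩
  intro ε hε y hy p hp1 hrec
  have hε0 : 0 < ε := hε.1
  have hε1 : ε ≤ 1 := hε.2
  have main : ∀ n, |p (n + 1) - ε * y| ≤ cseq B n * ε ^ 2 := by
    intro n; induction n with
    | zero => simp [hp1, cseq]
    | succ n ih =>
      have hcnn := cseq_nonneg B n
      have hrecn := hrec (n + 1) (Nat.le_add_left 1 n)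
      have hεy : |ε * y| ≤ B * ε := by
        rw [abs_mul, abs_of_pos hε0]; nlinarith [abs_nonneg y]
      have hpn : |p (n + 1)| ≤ (B + cseq B n) * ε := by
        have h1 : |p (n + 1)| ≤ |ε * y| + |p (n + 1) - ε * y| := by
          calc |p (n + 1)| = |ε * y + (p (n + 1) - ε * y)| := by ring_nf
            _ ≤ |ε * y| + |p (n + 1) - ε * y| := abs_add_le _ _
        have hsq : ε ^ 2 ≤ ε := by nlinarith
        have h3 : cseq B n * ε ^ 2 ≤ cseq B n * ε := mul_le_mul_of_nonneg_left hsq hcnn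
        nlinarith
      have hkey := sig_key (p (n + 1))
      have hrw : p (n + 1 + 1) - ε * y
          = (4 * sig (p (n + 1)) - 2 - p (n + 1)) + (p (n + 1) - ε * y) := by
        rw [hrecn]; ring
      rw [hrw]
      have h2 : (p (n + 1)) ^ 2 ≤ ((B + cseq B n) * ε) ^ 2 := by
        rw [← sq_abs]
        exact pow_le_pow_left₀ (abs_nonneg _) hpn 2
      calc |(4 * sig (p (n + 1)) - 2 - p (n + 1)) + (p (n + 1) - ε * y)|
          ≤ |4 * sig (p (n + 1)) - 2 - p (n + 1)| + |p (n + 1) - ε * y| := abs_add_le _ _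
        _ ≤ 4 * (p (n + 1)) ^ 2 + cseq B n * ε ^ 2 := by linarith
        _ ≤ cseq B (n + 1) * ε ^ 2 := by
            simp only [cseq]; nlinarith
  obtain ⟨m, rfl⟩ : ∃ m, M = m + 1 := ⟨M - 1, (Nat.succ_pred_eq_of_pos hM).symm⟩
  have hb := main (m + 1)
  rw [hrec (m + 1) (Nat.le_add_left 1 m)] at hb
  have heq : (4 * sig (p (m + 1)) - 2) / ε - y = (4 * sig (p (m + 1)) - 2 - ε * y) / ε := by
    field_simp
  rw [heq, abs_div, abs_of_pos hε0, div_le_iff₀ hε0]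
  calc |4 * sig (p (m + 1)) - 2 - ε * y| ≤ cseq B (m + 1) * ε ^ 2 := hb
    _ ≤ (cseq B (m + 1) + 1) * ε * ε := by nlinarith [cseq_nonneg B (m + 1), sq_nonneg ε]
end
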